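/- The relation ≺ on molecular trees (defined by S1 ≺ S2 iff R(G1,v1) ⊏ R(G2,v2), or R(G1,v1) = R(G2,v2) and childtrees(G1,v1) ≺ childtrees(G2,v2) lexicographically) is a strict total order on molecular trees: it is irreflexive, transitive, and any two distinct molecular trees G1, G2 satisfy exactly one of G1 ≺ G2 or G2 ≺ G1 or G1 = G2. -/

import Mathlib

/-!
Subtrees of molecular trees, up to the renumbering implicit in the paper, are exactly
ordered rooted trees whose nodes carry an element label `ℓ(v) ∈ 𝔼` and an incoming bond
label `in(G,v) ∈ ℕ` (`0` for the root of a molecular tree, `≥ 1` otherwise).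
We model them by the inductive type `RTree` below.
-/

/-- An ordered rooted tree with an element label and an incoming bond label at each
node; this represents `subtree(G,v)` of a molecular tree `G`. -/
inductive RTree (E : Type) : Type where
  | node : E → ℕ → List (RTree E) → RTree E

namespace RTree

variable {E : Type}

/-- The element label `ℓ(v)` of the root node. -/
def elemLabel : RTree E → E
  | node l _ _ => l

/-- The incoming bond label `in(G,v)`: `0` for the root of a molecular tree, and the
bond label of the edge to the parent otherwise. -/
def inBond : RTree E → ℕ
  | node _ i _ => i

/-- `childtrees(G,v)`: the ordered list of subtrees of the children of the root. -/
def children : RTree E → List (RTree E)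
  | node _ _ c => c

/-- The number of vertices `s` of the subtree. -/
def size : RTree E → ℕ
  | node _ _ c => 1 + (c.attach.map (fun x => size x.1)).sum
decreasing_by
  have := List.sizeOf_lt_of_mem x.2
  simp only [node.sizeOf_spec]
  omega

/-- The depth `d` of the subtree. -/
def depth : RTree E → ℕ
  | node _ _ c => 1 + (c.attach.map (fun x => depth x.1)).foldr max 0
decreasing_by
  have := List.sizeOf_lt_of_mem x.2
  simp only [node.sizeOf_spec]
  omega

/-- The tuple `R(G,v) = (d, s, c, ℓ(v), in(G,v))`. -/
def R (t : RTree E) : ℕ × ℕ × ℕ × E × ℕ :=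
  (t.depth, t.size, t.children.length, t.elemLabel, t.inBond)

/-- The lexicographic extension `⊏` of the fixed strict total order on `𝔼` (given by a
`LinearOrder` on `E`) and the usual `<` on `ℕ` to 5-tuples of the form `R(G,v)`. -/
def Rlt [LinearOrder E] (a b : ℕ × ℕ × ℕ × E × ℕ) : Prop :=
  a.1 < b.1 ∨ (a.1 = b.1 ∧
    (a.2.1 < b.2.1 ∨ (a.2.1 = b.2.1 ∧
      (a.2.2.1 < b.2.2.1 ∨ (a.2.2.1 = b.2.2.1 ∧
        (a.2.2.2.1 < b.2.2.2.1 ∨ (a.2.2.2.1 = b.2.2.2.1 ∧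
          a.2.2.2.2 < b.2.2.2.2)))))))

mutual
  /-- The order `≺` on subtrees of molecular trees (Definition 3 of the paper): the
  smallest relation such that `S₁ ≺ S₂` whenever (1) `R(G₁,v₁) ⊏ R(G₂,v₂)`, or
  (2) `R(G₁,v₁) = R(G₂,v₂)` and `childtrees(G₁,v₁) ≺ childtrees(G₂,v₂)` under the
  lexicographic extension of `≺` to tuples of subtrees. -/
  inductive Prec [LinearOrder E] : RTree E → RTree E → Prop where
    | base {t₁ t₂ : RTree E} : Rlt (R t₁) (R t₂) → Prec t₁ t₂
    | ofChildren {t₁ t₂ : RTree E} :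
        R t₁ = R t₂ → PrecList t₁.children t₂.children → Prec t₁ t₂

  /-- The lexicographic extension of `≺` to tuples of subtrees: there is a position
  where `≺` holds and all earlier positions carry equal subtrees. -/
  inductive PrecList [LinearOrder E] : List (RTree E) → List (RTree E) → Prop where
    | head {a b : RTree E} {l₁ l₂ : List (RTree E)} :
        Prec a b → PrecList (a :: l₁) (b :: l₂)
    | tail {a : RTree E} {l₁ l₂ : List (RTree E)} :
        PrecList l₁ l₂ → PrecList (a :: l₁) (a :: l₂)
end

/-- All bond labels inside the tree (i.e., the incoming bonds of all non-root nodes)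
are positive, as required of the labelling `b : E → ℕ_{>0}`. -/
inductive PosBonds : RTree E → Prop where
  | node (l : E) (i : ℕ) (c : List (RTree E)) :
      (∀ x ∈ c, 0 < x.inBond) → (∀ x ∈ c, PosBonds x) → PosBonds (node l i c)

/-- A molecular tree, viewed as an ordered rooted labelled tree: its root has incoming
bond `0` and all proper subtrees have positive incoming bonds. -/
def IsMolecularTree (t : RTree E) : Prop :=
  t.inBond = 0 ∧ PosBonds t

end RTree

open RTree

/-!
`R` is compared lexicographically first, so the trees that `≺` still has to separate have the
same number of children; comparing their child lists position by position, by induction on the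
trees, makes `≺` a strict total order on all labelled ordered trees.
-/

namespace RTree

variable {E : Type} [LinearOrder E]

def lexKey (a : ℕ × ℕ × ℕ × E × ℕ) : ℕ ×ₗ ℕ ×ₗ ℕ ×ₗ E ×ₗ ℕ :=
  toLex (a.1, toLex (a.2.1, toLex (a.2.2.1, toLex (a.2.2.2.1, a.2.2.2.2))))

omit [LinearOrder E] in
theorem lexKey_injective : Function.Injective (lexKey (E := E)) := by
  rintro ⟨a₁, a₂, a₃, a₄, a₅⟩ ⟨b₁, b₂, b₃, b₄, b₅⟩ h
  simp_all [lexKey]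

theorem rlt_iff_lexKey_lt {a b : ℕ × ℕ × ℕ × E × ℕ} : Rlt a b ↔ lexKey a < lexKey b := by
  simp only [Rlt, lexKey, Prod.Lex.lt_iff, ofLex_toLex]

theorem rlt_irrefl (a : ℕ × ℕ × ℕ × E × ℕ) : ¬ Rlt a a := by
  simp [rlt_iff_lexKey_lt]

theorem Rlt.trans {a b c : ℕ × ℕ × ℕ × E × ℕ} (hab : Rlt a b) (hbc : Rlt b c) : Rlt a c := by
  rw [rlt_iff_lexKey_lt] at *
  exact hab.trans hbc

theorem rlt_trichotomy (a b : ℕ × ℕ × ℕ × E × ℕ) : Rlt a b ∨ a = b ∨ Rlt b a := by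
  simp only [rlt_iff_lexKey_lt, ← lexKey_injective.eq_iff]
  exact lt_trichotomy _ _

omit [LinearOrder E] in
theorem sizeOf_lt_of_mem_children {t x : RTree E} (hx : x ∈ t.children) :
    sizeOf x < sizeOf t := by
  obtain ⟨l, i, c⟩ := t
  have := List.sizeOf_lt_of_mem (show x ∈ c from hx)
  simp only [node.sizeOf_spec]
  omega

omit [LinearOrder E] in
theorem eq_of_R_eq_of_children_eq {t₁ t₂ : RTree E} (hR : R t₁ = R t₂)
    (hc : t₁.children = t₂.children) : t₁ = t₂ := by
  obtain ⟨l₁, i₁, c₁⟩ := t₁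
  obtain ⟨l₂, i₂, c₂⟩ := t₂
  simp_all [R, elemLabel, inBond, children]

omit [LinearOrder E] in
theorem length_children_eq_of_R_eq {t₁ t₂ : RTree E} (hR : R t₁ = R t₂) :
    t₁.children.length = t₂.children.length :=
  congrArg (·.2.2.1) hR

theorem precList_irrefl {l : List (RTree E)} (h : ∀ t ∈ l, ¬ Prec t t) : ¬ PrecList l l := by
  induction l with
  | nil => nofun
  | cons a l ih =>
    rintro (hab | hl)
    · exact h a List.mem_cons_self hab
    · exact ih (fun t ht => h t (List.mem_cons_of_mem a ht)) hl

theorem precList_trans {l₁ l₂ l₃ : List (RTree E)}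
    (h : ∀ a ∈ l₁, ∀ b ∈ l₂, ∀ c ∈ l₃, Prec a b → Prec b c → Prec a c)
    (h₁₂ : PrecList l₁ l₂) (h₂₃ : PrecList l₂ l₃) : PrecList l₁ l₃ := by
  induction l₁ generalizing l₂ l₃ with
  | nil => nomatch h₁₂
  | cons a l₁ ih =>
    rcases h₁₂ with hab | h₁₂ <;> rcases h₂₃ with hbc | h₂₃
    · exact .head (h _ List.mem_cons_self _ List.mem_cons_self _ List.mem_cons_self hab hbc)
    · exact .head hab
    · exact .head hbc
    · exact .tail (ih (fun a ha b hb c hc => h a (List.mem_cons_of_mem _ ha)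
        b (List.mem_cons_of_mem _ hb) c (List.mem_cons_of_mem _ hc)) h₁₂ h₂₃)

theorem precList_trichotomy {l₁ l₂ : List (RTree E)} (hlen : l₁.length = l₂.length)
    (h : ∀ a ∈ l₁, ∀ b ∈ l₂, Prec a b ∨ a = b ∨ Prec b a) :
    PrecList l₁ l₂ ∨ l₁ = l₂ ∨ PrecList l₂ l₁ := by
  induction l₁ generalizing l₂ with
  | nil =>
    rw [List.length_eq_zero_iff.mp hlen.symm]
    exact .inr (.inl rfl)
  | cons a l₁ ih =>
    obtain _ | ⟨b, l₂⟩ := l₂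
    · simp at hlen
    rcases h a List.mem_cons_self b List.mem_cons_self with hab | rfl | hba
    · exact .inl (.head hab)
    · rcases ih (by simpa using hlen) (fun x hx y hy =>
          h x (List.mem_cons_of_mem _ hx) y (List.mem_cons_of_mem _ hy)) with hl | rfl | hl
      · exact .inl (.tail hl)
      · exact .inr (.inl rfl)
      · exact .inr (.inr (.tail hl))
    · exact .inr (.inr (.head hba))

theorem prec_irrefl (t : RTree E) : ¬ Prec t t := by
  rintro (h | ⟨-, h⟩)
  · exact rlt_irrefl _ h
  · exact precList_irrefl (fun x hx => prec_irrefl x) h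
termination_by t
decreasing_by exact sizeOf_lt_of_mem_children hx

theorem Prec.trans {t₁ t₂ t₃ : RTree E} (h₁₂ : Prec t₁ t₂) (h₂₃ : Prec t₂ t₃) : Prec t₁ t₃ := by
  rcases h₁₂ with h₁₂ | ⟨hR₁₂, h₁₂⟩ <;> rcases h₂₃ with h₂₃ | ⟨hR₂₃, h₂₃⟩
  · exact .base (h₁₂.trans h₂₃)
  · exact .base (hR₂₃ ▸ h₁₂)
  · exact .base (hR₁₂ ▸ h₂₃)
  · exact .ofChildren (hR₁₂.trans hR₂₃)
      (precList_trans (fun a ha _ _ _ _ hab hbc => Prec.trans hab hbc) h₁₂ h₂₃)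
termination_by t₁
decreasing_by exact sizeOf_lt_of_mem_children ha

theorem prec_trichotomy (t₁ t₂ : RTree E) : Prec t₁ t₂ ∨ t₁ = t₂ ∨ Prec t₂ t₁ := by
  rcases rlt_trichotomy (R t₁) (R t₂) with hR | hR | hR
  · exact .inl (.base hR)
  · rcases precList_trichotomy (length_children_eq_of_R_eq hR)
        (fun a ha b _ => prec_trichotomy a b) with h | h | h
    · exact .inl (.ofChildren hR h)
    · exact .inr (.inl (eq_of_R_eq_of_children_eq hR h))
    · exact .inr (.inr (.ofChildren hR.symm h))
  · exact .inr (.inr (.base hR))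
termination_by t₁
decreasing_by exact sizeOf_lt_of_mem_children ha

instance : IsStrictTotalOrder (RTree E) Prec where
  irrefl := prec_irrefl
  trans _ _ _ := Prec.trans
  trichotomous a b hab hba := ((prec_trichotomy a b).resolve_left hab).resolve_right hba

end RTree

/-- Proposition 1: the relation `≺` is a strict total order on molecular trees.  It is
irreflexive, transitive, and any two molecular trees `G₁`, `G₂` satisfy exactly one of
`G₁ ≺ G₂`, `G₂ ≺ G₁`, or `G₁ = G₂`. -/
theorem prec_isStrictTotalOrder_on_molecular_trees {E : Type} [LinearOrder E] :
    (∀ t : RTree E, IsMolecularTree t → ¬ Prec t t) ∧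
    (∀ t₁ t₂ t₃ : RTree E, IsMolecularTree t₁ → IsMolecularTree t₂ → IsMolecularTree t₃ →
        Prec t₁ t₂ → Prec t₂ t₃ → Prec t₁ t₃) ∧
    (∀ t₁ t₂ : RTree E, IsMolecularTree t₁ → IsMolecularTree t₂ →
        (Prec t₁ t₂ ∧ ¬ Prec t₂ t₁ ∧ t₁ ≠ t₂) ∨
        (Prec t₂ t₁ ∧ ¬ Prec t₁ t₂ ∧ t₁ ≠ t₂) ∨
        (t₁ = t₂ ∧ ¬ Prec t₁ t₂ ∧ ¬ Prec t₂ t₁)) := by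
  refine ⟨fun t _ => irrefl t, fun _ _ _ _ _ _ => _root_.trans, fun t₁ t₂ _ _ => ?_⟩
  rcases trichotomous_of Prec t₁ t₂ with h | rfl | h
  · exact .inl ⟨h, asymm h, ne_of_irrefl h⟩
  · exact .inr (.inr ⟨rfl, irrefl t₁, irrefl t₁⟩)
  · exact .inr (.inl ⟨h, asymm h, ne_of_irrefl' h⟩)
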